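/- arXiv:1311.3506 — 2 statements merged into one kernel-verified Lean document; each statement's English description precedes it below -/
import Mathlib

section
/- Any automorphism of the free group F₂ on generators a, b sends the commutator [a,b] = aba⁻¹b⁻¹ to a conjugate of [a,b] or of its inverse [a,b]⁻¹. -/
/-!
Nielsen reduction. The moves `(x, y) ↦ (y, x), (x⁻¹, y), (x * y, y), (x, x * y),
(g * x * g⁻¹, g * y * g⁻¹)` preserve both "`x, y` generate" and the class of `⁅x, y⁆` up to
conjugation and inversion. Starting from `(α a, α b)`, move to a pair `(x, y)` of minimal total
length. Minimality makes `S = {x, x⁻¹, y, y⁻¹}` Nielsen reduced: `|u| ≤ |u * v|` for `v ≠ u⁻¹`, and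
the letters cancelled on the two sides of the middle factor of `u * v * w` never exhaust it. (If
they did, then `x = p * q` and `y^{±1} = p * t * q` as reduced words, and conjugating
`(x, x⁻¹ * y^{±1})` by `q` gives the shorter pair `(q * p, t)`.) A reduced product of `n` elements
of a Nielsen-reduced set has length at least `n`, so the generators `a` and `b`, of length one,
already lie in `S`. Hence `(a, b)` is reachable from `(x, y)`, and `α ⁅a, b⁆ = ⁅α a, α b⁆` is
conjugate to `⁅a, b⁆` or its inverse.
-/

open scoped commutatorElement

namespace List

variable {β : Type*} [DecidableEq β]

def commonPrefixLength : List β → List β → ℕ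
  | a :: l₁, b :: l₂ => if a = b then commonPrefixLength l₁ l₂ + 1 else 0
  | _, _ => 0

@[simp]
theorem commonPrefixLength_nil_left (l : List β) : commonPrefixLength [] l = 0 := rfl

@[simp]
theorem commonPrefixLength_nil_right (l : List β) : commonPrefixLength l [] = 0 := by
  cases l <;> rfl

theorem commonPrefixLength_cons_cons (a b : β) (l₁ l₂ : List β) :
    commonPrefixLength (a :: l₁) (b :: l₂) = if a = b then commonPrefixLength l₁ l₂ + 1 else 0 :=
  rfl

theorem commonPrefixLength_comm (l₁ l₂ : List β) :
    commonPrefixLength l₁ l₂ = commonPrefixLength l₂ l₁ := by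
  induction l₁ generalizing l₂ with
  | nil => simp
  | cons a l₁ ih =>
    cases l₂ with
    | nil => simp
    | cons b l₂ => simp only [commonPrefixLength_cons_cons, ih, eq_comm]

theorem commonPrefixLength_le_length_left (l₁ l₂ : List β) :
    commonPrefixLength l₁ l₂ ≤ l₁.length := by
  induction l₁ generalizing l₂ with
  | nil => simp
  | cons a l₁ ih =>
    cases l₂ with
    | nil => simp
    | cons b l₂ =>
      rw [commonPrefixLength_cons_cons]
      split_ifs
      · exact Nat.succ_le_succ (ih l₂)
      · exact Nat.zero_le _

theorem commonPrefixLength_le_length_right (l₁ l₂ : List β) :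
    commonPrefixLength l₁ l₂ ≤ l₂.length :=
  commonPrefixLength_comm l₁ l₂ ▸ commonPrefixLength_le_length_left l₂ l₁

theorem take_commonPrefixLength (l₁ l₂ : List β) :
    l₁.take (commonPrefixLength l₁ l₂) = l₂.take (commonPrefixLength l₁ l₂) := by
  induction l₁ generalizing l₂ with
  | nil => simp
  | cons a l₁ ih =>
    cases l₂ with
    | nil => simp
    | cons b l₂ =>
      rw [commonPrefixLength_cons_cons]
      split_ifs with h
      · simp [h, ih]
      · simp

theorem take_prefix_of_le_commonPrefixLength {l₁ l₂ : List β} {k : ℕ}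
    (hk : k ≤ commonPrefixLength l₁ l₂) : l₁.take k <+: l₂ := by
  rw [← min_eq_left hk, ← take_take, take_commonPrefixLength, take_take]
  exact take_prefix _ _

theorem commonPrefixLength_eq_of_lt {l₁ l₂ l₃ : List β}
    (h : commonPrefixLength l₂ l₃ < commonPrefixLength l₁ l₂) :
    commonPrefixLength l₁ l₃ = commonPrefixLength l₂ l₃ := by
  induction l₁ generalizing l₂ l₃ with
  | nil => simp at h
  | cons a l₁ ih =>
    cases l₂ with
    | nil => simp at h
    | cons b l₂ =>
      rw [commonPrefixLength_cons_cons] at h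
      split_ifs at h with hab
      · subst hab
        cases l₃ with
        | nil => simp
        | cons c l₃ =>
          simp only [commonPrefixLength_cons_cons] at h ⊢
          split_ifs at h ⊢
          · rw [ih (l₂ := l₂) (by omega)]
          · rfl
      · simp at h

end List

section

variable {G : Type*} [Group G]

def IsConjUpToInv (g h : G) : Prop :=
  IsConj g h ∨ IsConj g⁻¹ h

theorem IsConj.inv {g h : G} (hgh : IsConj g h) : IsConj g⁻¹ h⁻¹ := by
  obtain ⟨c, rfl⟩ := isConj_iff.mp hgh
  exact isConj_iff.mpr ⟨c, conj_inv.symm⟩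

namespace IsConjUpToInv

theorem refl (g : G) : IsConjUpToInv g g :=
  Or.inl (IsConj.refl g)

theorem symm {g h : G} : IsConjUpToInv g h → IsConjUpToInv h g
  | Or.inl hgh => Or.inl hgh.symm
  | Or.inr hgh => Or.inr (by simpa using hgh.inv.symm)

theorem trans {g h k : G} : IsConjUpToInv g h → IsConjUpToInv h k → IsConjUpToInv g k
  | Or.inl hgh, Or.inl hhk => Or.inl (hgh.trans hhk)
  | Or.inl hgh, Or.inr hhk => Or.inr (hgh.inv.trans hhk)
  | Or.inr hgh, Or.inl hhk => Or.inr (hgh.trans hhk)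
  | Or.inr hgh, Or.inr hhk => Or.inl (by simpa using hgh.inv.trans hhk)

end IsConjUpToInv

inductive PairMove : G × G → G × G → Prop
  | swap (x y : G) : PairMove (x, y) (y, x)
  | invFst (x y : G) : PairMove (x, y) (x⁻¹, y)
  | mulFst (x y : G) : PairMove (x, y) (x * y, y)
  | mulSnd (x y : G) : PairMove (x, y) (x, x * y)
  | conj (g x y : G) : PairMove (x, y) (g * x * g⁻¹, g * y * g⁻¹)

abbrev PairReach : G × G → G × G → Prop :=
  Relation.ReflTransGen PairMove

theorem closure_pair_eq_top_of_mem {x y x' y' : G} (h : Subgroup.closure {x, y} = ⊤)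
    (hx : x ∈ Subgroup.closure {x', y'}) (hy : y ∈ Subgroup.closure {x', y'}) :
    Subgroup.closure {x', y'} = ⊤ :=
  eq_top_iff.mpr <| h ▸ (Subgroup.closure_le _).mpr (Set.insert_subset hx (by simpa using hy))

theorem PairMove.closure_eq_top {p q : G × G} (hpq : PairMove p q)
    (hp : Subgroup.closure {p.1, p.2} = ⊤) : Subgroup.closure {q.1, q.2} = ⊤ := by
  have hx' : q.1 ∈ Subgroup.closure {q.1, q.2} := Subgroup.subset_closure (by simp)
  have hy' : q.2 ∈ Subgroup.closure {q.1, q.2} := Subgroup.subset_closure (by simp)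
  cases hpq with
  | swap x y => rwa [Set.pair_comm]
  | invFst x y => exact closure_pair_eq_top_of_mem hp (by simpa using inv_mem hx') hy'
  | mulFst x y => exact closure_pair_eq_top_of_mem hp (by simpa using mul_mem hx' (inv_mem hy')) hy'
  | mulSnd x y => exact closure_pair_eq_top_of_mem hp hx' (by simpa using mul_mem (inv_mem hx') hy')
  | conj g x y =>
    have himage : ({g * x * g⁻¹, g * y * g⁻¹} : Set G) = MulAut.conj g '' {x, y} := by
      simp [Set.image_pair]
    rw [himage, ← MonoidHom.coe_coe, ← MonoidHom.map_closure, hp]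
    exact Subgroup.map_top_of_surjective _ (MulEquiv.surjective _)

theorem PairMove.isConjUpToInv_commutatorElement {p q : G × G} (hpq : PairMove p q) :
    IsConjUpToInv ⁅p.1, p.2⁆ ⁅q.1, q.2⁆ := by
  cases hpq with
  | swap x y => exact Or.inr (by rw [commutatorElement_inv])
  | invFst x y => exact Or.inr (isConj_iff.mpr ⟨x⁻¹, by simp only [commutatorElement_def]; group⟩)
  | mulFst x y => exact Or.inl (isConj_iff.mpr ⟨1, by simp only [commutatorElement_def]; group⟩)
  | mulSnd x y => exact Or.inl (isConj_iff.mpr ⟨x, by simp only [commutatorElement_def]; group⟩)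
  | conj g x y => exact Or.inl (isConj_iff.mpr ⟨g, by simp only [commutatorElement_def]; group⟩)

theorem PairReach.closure_eq_top {p q : G × G} (hpq : PairReach p q)
    (hp : Subgroup.closure {p.1, p.2} = ⊤) : Subgroup.closure {q.1, q.2} = ⊤ := by
  induction hpq with
  | refl => exact hp
  | tail _ hmove ih => exact hmove.closure_eq_top ih

theorem PairReach.isConjUpToInv_commutatorElement {p q : G × G} (hpq : PairReach p q) :
    IsConjUpToInv ⁅p.1, p.2⁆ ⁅q.1, q.2⁆ := by
  induction hpq with
  | refl => exact IsConjUpToInv.refl _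
  | tail _ hmove ih => exact ih.trans hmove.isConjUpToInv_commutatorElement

theorem pairReach_swap (x y : G) : PairReach (x, y) (y, x) :=
  .single (.swap x y)

theorem pairReach_inv_snd (x y : G) : PairReach (x, y) (x, y⁻¹) :=
  ((pairReach_swap x y).tail (.invFst y x)).trans (pairReach_swap y⁻¹ x)

theorem eq_or_eq_inv_of_mem_pair_inv {x u v : G} (hu : u ∈ ({x, x⁻¹} : Set G))
    (hv : v ∈ ({x, x⁻¹} : Set G)) : v = u ∨ v = u⁻¹ := by
  rcases hu with rfl | rfl <;> rcases hv with rfl | rfl <;> simp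

theorem pairReach_of_mem_pair_inv {x y u v : G} (hu : u ∈ ({x, x⁻¹} : Set G))
    (hv : v ∈ ({y, y⁻¹} : Set G)) : PairReach (x, y) (u, v) := by
  have hxu : PairReach (x, y) (u, y) := by
    rcases hu with rfl | rfl
    · exact .refl
    · exact .single (.invFst x y)
  rcases hv with rfl | rfl
  · exact hxu
  · exact hxu.trans (pairReach_inv_snd u y)

def symmPair (x y : G) : Set G :=
  {x, x⁻¹} ∪ {y, y⁻¹}

theorem symmPair_comm (x y : G) : symmPair x y = symmPair y x :=
  Set.union_comm _ _

theorem inv_mem_pair_inv {x u : G} (hu : u ∈ ({x, x⁻¹} : Set G)) : u⁻¹ ∈ ({x, x⁻¹} : Set G) := by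
  rcases hu with rfl | rfl <;> simp

theorem inv_mem_symmPair {x y u : G} (hu : u ∈ symmPair x y) : u⁻¹ ∈ symmPair x y :=
  hu.imp inv_mem_pair_inv inv_mem_pair_inv

theorem pairReach_of_mem_symmPair {x y a b : G} (ha : a ∈ symmPair x y) (hb : b ∈ symmPair x y)
    (hba : b ≠ a) (hba' : b ≠ a⁻¹) : PairReach (x, y) (a, b) := by
  rcases ha with ha | ha <;> rcases hb with hb | hb
  · exact ((eq_or_eq_inv_of_mem_pair_inv ha hb).elim hba hba').elim
  · exact pairReach_of_mem_pair_inv ha hb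
  · exact (pairReach_swap x y).trans (pairReach_of_mem_pair_inv ha hb)
  · exact ((eq_or_eq_inv_of_mem_pair_inv ha hb).elim hba hba').elim

theorem exists_list_prod_eq_of_mem_closure {S : Set G} (hS : ∀ s ∈ S, s⁻¹ ∈ S) {g : G}
    (hg : g ∈ Subgroup.closure S) :
    ∃ L : List G, (∀ s ∈ L, s ∈ S) ∧ L.IsChain (fun s t => t ≠ s⁻¹) ∧ L.prod = g := by
  have hcons : ∀ s ∈ S, ∀ g : G,
      (∃ L : List G, (∀ s ∈ L, s ∈ S) ∧ L.IsChain (fun s t => t ≠ s⁻¹) ∧ L.prod = g) →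
      ∃ L : List G, (∀ s ∈ L, s ∈ S) ∧ L.IsChain (fun s t => t ≠ s⁻¹) ∧ L.prod = s * g := by
    rintro s hs _ ⟨L, hLS, hLc, rfl⟩
    cases L with
    | nil => exact ⟨[s], by simpa using hs, List.isChain_singleton s, by simp⟩
    | cons t T =>
      by_cases ht : t = s⁻¹
      · exact ⟨T, fun u hu => hLS u (List.mem_cons_of_mem t hu), hLc.tail, by simp [ht]⟩
      · exact ⟨s :: t :: T, List.forall_mem_cons.mpr ⟨hs, hLS⟩,
          List.isChain_cons_cons.mpr ⟨ht, hLc⟩, List.prod_cons⟩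
  induction hg using Subgroup.closure_induction_left with
  | one => exact ⟨[], by simp⟩
  | mul_left s hs g _ ih => exact hcons s hs g ih
  | inv_mul_cancel s hs g _ ih => exact hcons s⁻¹ (hS s hs) g ih

end

namespace FreeGroup

open List

variable {α : Type*}

theorem IsReduced.invRev {L : List (α × Bool)} (h : IsReduced L) : IsReduced (invRev L) := by
  rw [IsReduced, FreeGroup.invRev, isChain_reverse, isChain_map]
  exact h.imp fun a b hab hba => by simpa using (hab hba.symm).symm

theorem _root_.List.IsPrefix.invRev {L₁ L₂ : List (α × Bool)} (h : L₁ <+: L₂) :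
    FreeGroup.invRev L₁ <:+ FreeGroup.invRev L₂ := by
  simpa only [FreeGroup.invRev, reverse_suffix] using h.map _

theorem _root_.List.IsSuffix.invRev {L₁ L₂ : List (α × Bool)} (h : L₁ <:+ L₂) :
    FreeGroup.invRev L₁ <+: FreeGroup.invRev L₂ := by
  simpa only [FreeGroup.invRev, reverse_prefix] using h.map _

variable [DecidableEq α]

local notation "‖" g "‖" => FreeGroup.norm g

theorem toWord_mk_of_isReduced {L : List (α × Bool)} (h : IsReduced L) : (mk L).toWord = L := by
  rw [toWord_mk, h.reduce_eq]

theorem norm_mk_of_isReduced {L : List (α × Bool)} (h : IsReduced L) : ‖mk L‖ = L.length := by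
  rw [norm, toWord_mk_of_isReduced h]

theorem norm_inv_mk_mul_mk_add_two_mul_commonPrefixLength {U V : List (α × Bool)}
    (hU : IsReduced U) (hV : IsReduced V) :
    ‖(mk U)⁻¹ * mk V‖ + 2 * U.commonPrefixLength V = U.length + V.length := by
  induction U generalizing V with
  | nil => simp [← one_eq_mk, norm_mk_of_isReduced hV]
  | cons u U ih =>
    cases V with
    | nil => simp [← one_eq_mk, norm_mk_of_isReduced hU.invRev]
    | cons v V =>
      rw [commonPrefixLength_cons_cons]
      split_ifs with huv
      · subst huv
        have hcancel : (mk (u :: U))⁻¹ * mk (u :: V) = (mk U)⁻¹ * mk V := by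
          rw [← List.singleton_append, ← mul_mk, ← List.singleton_append (l := V), ← mul_mk]
          group
        have := ih (V := V) (IsChain.tail hU) (IsChain.tail hV)
        simp only [hcancel, length_cons]
        omega
      · have hred : IsReduced (FreeGroup.invRev (u :: U) ++ v :: V) := by
          refine hU.invRev.append hV ?_
          simp only [FreeGroup.invRev, getLast?_reverse, head?_map, head?_cons, Option.map_some,
            Option.mem_def, Option.some.injEq]
          rintro _ rfl _ rfl h
          simp only at h ⊢
          by_contra h'
          exact huv (Prod.ext h (by simpa using h'))
        rw [inv_mk, mul_mk, norm_mk_of_isReduced hred]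
        simp

theorem IsReduced.two_mul_commonPrefixLength_invRev_lt {U : List (α × Bool)} (hU : IsReduced U)
    (hne : U ≠ []) : 2 * (FreeGroup.invRev U).commonPrefixLength U < U.length := by
  set k := (FreeGroup.invRev U).commonPrefixLength U with hk
  have hkU : k ≤ U.length := commonPrefixLength_le_length_right _ _
  -- the first `k` letters of `U` mirror its last `k` ones, so for `2 * k ≥ |U|` the middle letter
  -- (odd length) or the middle pair (even length) of `U` cancels
  have hmirror : ∀ i, i < k → U[i]? = U[U.length - 1 - i]?.map fun a => (a.1, !a.2) := by
    intro i hi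
    have := congrArg (·[i]?) (take_commonPrefixLength (FreeGroup.invRev U) U)
    simp only [getElem?_take, ← hk, if_pos hi] at this
    rw [← this, FreeGroup.invRev, getElem?_reverse (by rw [length_map]; omega), getElem?_map, length_map]
  by_contra! hlong
  have hlen : 0 < U.length := length_pos_iff.mpr hne
  obtain ⟨s, hs | hs⟩ := Nat.even_or_odd' U.length
  · have h := hmirror (s - 1) (by omega)
    rw [show U.length - 1 - (s - 1) = s - 1 + 1 by omega, getElem?_eq_getElem (by omega),
      getElem?_eq_getElem (by omega), Option.map_some, Option.some_inj] at h
    have hchain := isChain_iff_getElem.mp hU (s - 1) (by omega)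
    rw [h] at hchain
    simp at hchain
  · have h := hmirror s (by omega)
    rw [show U.length - 1 - s = s by omega, getElem?_eq_getElem (by omega), Option.map_some,
      Option.some_inj] at h
    simpa using congrArg Prod.snd h

def gromovProduct (g h : FreeGroup α) : ℕ :=
  g.toWord.commonPrefixLength h.toWord

theorem gromovProduct_comm (g h : FreeGroup α) : gromovProduct g h = gromovProduct h g :=
  commonPrefixLength_comm _ _

theorem norm_inv_mul_add_two_mul_gromovProduct (g h : FreeGroup α) :
    ‖g⁻¹ * h‖ + 2 * gromovProduct g h = ‖g‖ + ‖h‖ := by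
  have := norm_inv_mk_mul_mk_add_two_mul_commonPrefixLength (isReduced_toWord (x := g))
    (isReduced_toWord (x := h))
  rwa [mk_toWord, mk_toWord] at this

def cancellation (u v : FreeGroup α) : ℕ :=
  gromovProduct u⁻¹ v

theorem norm_mul_add_two_mul_cancellation (u v : FreeGroup α) :
    ‖u * v‖ + 2 * cancellation u v = ‖u‖ + ‖v‖ := by
  simpa [cancellation] using norm_inv_mul_add_two_mul_gromovProduct u⁻¹ v

theorem cancellation_inv_inv (u v : FreeGroup α) : cancellation v⁻¹ u⁻¹ = cancellation u v := by
  have h₁ := norm_mul_add_two_mul_cancellation u v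
  have h₂ := norm_mul_add_two_mul_cancellation v⁻¹ u⁻¹
  rw [← mul_inv_rev, norm_inv_eq, norm_inv_eq, norm_inv_eq] at h₂
  omega

theorem cancellation_mul_right_eq {w v g : FreeGroup α}
    (h : cancellation w v + cancellation v g < ‖v‖) :
    cancellation w (v * g) = cancellation w v := by
  have hvg : gromovProduct (v * g) v + cancellation v g = ‖v‖ := by
    have h₁ := norm_inv_mul_add_two_mul_gromovProduct (v * g) v
    have h₂ := norm_mul_add_two_mul_cancellation v g
    rw [mul_inv_rev, inv_mul_cancel_right, norm_inv_eq] at h₁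
    omega
  have hlt : gromovProduct v w⁻¹ < gromovProduct (v * g) v := by
    rw [gromovProduct_comm]
    exact (show cancellation w v < _ by omega)
  unfold cancellation
  rw [gromovProduct_comm, gromovProduct_comm w⁻¹]
  exact commonPrefixLength_eq_of_lt hlt

theorem two_mul_cancellation_self_lt {v : FreeGroup α} (hv : v ≠ 1) :
    2 * cancellation v v < ‖v‖ := by
  rw [cancellation, gromovProduct, toWord_inv]
  exact isReduced_toWord.two_mul_commonPrefixLength_invRev_lt (toWord_eq_nil_iff.not.mpr hv)

theorem norm_le_norm_mul_self (v : FreeGroup α) : ‖v‖ ≤ ‖v * v‖ := by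
  rcases eq_or_ne v 1 with rfl | hv
  · simp
  · have := norm_mul_add_two_mul_cancellation v v
    have := two_mul_cancellation_self_lt hv
    omega

theorem norm_eq_of_mem_pair_inv {x u : FreeGroup α} (hu : u ∈ ({x, x⁻¹} : Set (FreeGroup α))) :
    ‖u‖ = ‖x‖ := by
  rcases hu with rfl | rfl <;> simp

theorem exists_eq_mul_mul_of_prefix_of_suffix {p q z : FreeGroup α} (hp : p.toWord <+: z.toWord)
    (hq : q.toWord <:+ z.toWord) (hlen : ‖p‖ + ‖q‖ ≤ ‖z‖) :
    ∃ t, z = p * t * q ∧ ‖t‖ + ‖p‖ + ‖q‖ ≤ ‖z‖ := by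
  change p.toWord.length + q.toWord.length ≤ z.toWord.length at hlen
  obtain ⟨R, hR⟩ := hp
  have hRlen : p.toWord.length + R.length = z.toWord.length := by rw [← hR, length_append]
  obtain ⟨M, hM⟩ := suffix_of_suffix_length_le hq (hR ▸ suffix_append _ _) (by omega)
  refine ⟨mk M, ?_, ?_⟩
  · conv_lhs => rw [← mk_toWord (x := z), ← hR, ← hM, ← append_assoc]
    rw [← mul_mk, ← mul_mk, mk_toWord, mk_toWord]
  · have hMlen : M.length + q.toWord.length = R.length := by rw [← hM, length_append]
    have hMnorm : ‖mk M‖ ≤ M.length := norm_mk_le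
    change ‖mk M‖ + p.toWord.length + q.toWord.length ≤ z.toWord.length
    omega

theorem exists_eq_mul_of_le_cancellation_add {u x w : FreeGroup α}
    (h : ‖x‖ ≤ cancellation u x + cancellation x w) :
    ∃ p q, x = p * q ∧ p.toWord <+: u⁻¹.toWord ∧ q.toWord <:+ w⁻¹.toWord ∧
      ‖p‖ = cancellation u x ∧ ‖q‖ = ‖x‖ - cancellation u x := by
  set n := cancellation u x with hn
  have hnx : n ≤ ‖x‖ := commonPrefixLength_le_length_right _ _
  have hP : IsReduced (x.toWord.take n) := isReduced_toWord.infix (take_prefix _ _).isInfix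
  have hQ : IsReduced (x.toWord.drop n) := isReduced_toWord.infix (drop_suffix _ _).isInfix
  refine ⟨mk (x.toWord.take n), mk (x.toWord.drop n), by rw [mul_mk, take_append_drop, mk_toWord],
    ?_, ?_, ?_, ?_⟩
  · rw [toWord_mk_of_isReduced hP]
    exact take_prefix_of_le_commonPrefixLength (commonPrefixLength_comm u⁻¹.toWord _).le
  · have hinv : FreeGroup.invRev (x.toWord.drop n) = x⁻¹.toWord.take (‖x‖ - n) := by
      rw [toWord_inv, FreeGroup.invRev, FreeGroup.invRev, take_reverse, length_map, map_drop]
      congr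
      have hxlen : x.toWord.length = ‖x‖ := rfl
      omega
    rw [toWord_mk_of_isReduced hQ, toWord_inv, ← invRev_invRev (L₁ := x.toWord.drop n), hinv]
    exact (take_prefix_of_le_commonPrefixLength (show ‖x‖ - n ≤ cancellation x w by omega)).invRev
  · rw [norm_mk_of_isReduced hP, length_take]
    exact min_eq_left hnx
  · rw [norm_mk_of_isReduced hQ, length_drop]
    rfl

structure IsNielsenReduced (S : Set (FreeGroup α)) : Prop where
  one_notMem : (1 : FreeGroup α) ∉ S
  norm_le_norm_mul : ∀ u ∈ S, ∀ v ∈ S, v ≠ u⁻¹ → ‖u‖ ≤ ‖u * v‖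
  cancellation_add_lt : ∀ u ∈ S, ∀ v ∈ S, ∀ w ∈ S, v ≠ u⁻¹ → w ≠ v⁻¹ →
    cancellation u v + cancellation v w < ‖v‖

namespace IsNielsenReduced

variable {S : Set (FreeGroup α)}

theorem cancellation_prod (hS : IsNielsenReduced S) {v : FreeGroup α} {T : List (FreeGroup α)}
    (hL : ∀ u ∈ v :: T, u ∈ S) (hc : (v :: T).IsChain (fun s t => t ≠ s⁻¹))
    {w : FreeGroup α} (hw : w ∈ S) (hwv : v ≠ w⁻¹) :
    cancellation w (v :: T).prod = cancellation w v ∧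
      T.length + 1 + cancellation w v ≤ ‖(v :: T).prod‖ := by
  have hvS : v ∈ S := hL v mem_cons_self
  induction T generalizing v w with
  | nil =>
    have hv : ‖v‖ ≠ 0 := norm_eq_zero.not.mpr fun h => hS.one_notMem (h ▸ hvS)
    have := hS.norm_le_norm_mul w hw v hvS hwv
    have := norm_mul_add_two_mul_cancellation w v
    simp only [prod_cons, prod_nil, mul_one, length_nil, true_and]
    omega
  | cons v' T ih =>
    have hv'S : v' ∈ S := hL v' (mem_cons_of_mem v mem_cons_self)
    have hvv' : v' ≠ v⁻¹ := (isChain_cons_cons.mp hc).1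
    obtain ⟨hκ, hlen⟩ := ih (fun u hu => hL u (mem_cons_of_mem v hu)) hc.tail hvS hvv' hv'S
    have hN2 := hS.cancellation_add_lt w hw v hvS v' hv'S hwv hvv'
    have := norm_mul_add_two_mul_cancellation v (v' :: T).prod
    rw [prod_cons]
    refine ⟨cancellation_mul_right_eq (by rwa [hκ]), ?_⟩
    simp only [length_cons] at hlen ⊢
    omega

theorem length_le_norm_prod (hS : IsNielsenReduced S) {L : List (FreeGroup α)}
    (hLS : ∀ u ∈ L, u ∈ S) (hLc : L.IsChain (fun s t => t ≠ s⁻¹)) : L.length ≤ ‖L.prod‖ := by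
  cases L with
  | nil => simp
  | cons v T =>
    have hvS : v ∈ S := hLS v mem_cons_self
    have hvv : v ≠ v⁻¹ := by
      intro h
      have := norm_le_norm_mul_self v
      rw [mul_eq_one_iff_eq_inv.mpr h, norm_one, Nat.le_zero, norm_eq_zero] at this
      exact hS.one_notMem (this ▸ hvS)
    have := (hS.cancellation_prod hLS hLc hvS hvv).2
    simp only [length_cons]
    omega

theorem mem_of_norm_eq_one (hS : IsNielsenReduced S) (hinv : ∀ s ∈ S, s⁻¹ ∈ S) {g : FreeGroup α}
    (hg : g ∈ Subgroup.closure S) (hg1 : ‖g‖ = 1) : g ∈ S := by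
  obtain ⟨L, hLS, hLc, rfl⟩ := exists_list_prod_eq_of_mem_closure hinv hg
  have hlen := hS.length_le_norm_prod hLS hLc
  match L, hLS, hlen, hg1 with
  | [], _, _, hg1 => simp at hg1
  | [s], hLS, _, _ => simpa using hLS
  | _ :: _ :: _, _, hlen, hg1 => simp only [length_cons] at hlen; omega

end IsNielsenReduced

def IsMinimalPair (p : FreeGroup α × FreeGroup α) : Prop :=
  ∀ q, PairReach p q → ‖p.1‖ + ‖p.2‖ ≤ ‖q.1‖ + ‖q.2‖

theorem exists_pairReach_isMinimalPair (p : FreeGroup α × FreeGroup α) :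
    ∃ q, PairReach p q ∧ IsMinimalPair q := by
  obtain ⟨q, hpq, hq⟩ := (measure fun q : FreeGroup α × FreeGroup α => ‖q.1‖ + ‖q.2‖).wf.has_min
    {q | PairReach p q} ⟨p, .refl⟩
  exact ⟨q, hpq, fun r hqr => not_lt.mp (hq r (hpq.trans hqr))⟩

namespace IsMinimalPair

theorem of_pairReach {p q : FreeGroup α × FreeGroup α} (hp : IsMinimalPair p)
    (hpq : PairReach p q) (hw : ‖q.1‖ + ‖q.2‖ ≤ ‖p.1‖ + ‖p.2‖) : IsMinimalPair q :=
  fun r hqr => hw.trans (hp r (hpq.trans hqr))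

theorem eq_one_of_eq_mul_mul {x z p q t : FreeGroup α} (hmin : IsMinimalPair (x, z))
    (hx : x = p * q) (hz : z = p * t * q) (hlen : ‖t‖ + ‖p‖ + ‖q‖ ≤ ‖z‖) : x = 1 := by
  -- `(x, z) ↦ (x, x⁻¹ * z)`, then conjugation by `q`
  have hreach : PairReach (x, z) (q * p, t) := by
    have h := (((Relation.ReflTransGen.single (PairMove.invFst x z)).tail
      (PairMove.mulSnd x⁻¹ z)).tail (PairMove.invFst x⁻¹ (x⁻¹ * z))).tail
      (PairMove.conj q x⁻¹⁻¹ (x⁻¹ * z))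
    convert h using 2 <;> (subst hx hz; group)
  have hw := hmin _ hreach
  dsimp only at hw
  have := norm_mul_le q p
  exact norm_eq_zero.mp (by omega)

variable {x y : FreeGroup α}

theorem swap (hmin : IsMinimalPair (x, y)) : IsMinimalPair (y, x) :=
  hmin.of_pairReach (pairReach_swap x y) (add_comm _ _).le

theorem inv_snd (hmin : IsMinimalPair (x, y)) : IsMinimalPair (x, y⁻¹) :=
  hmin.of_pairReach (pairReach_inv_snd x y) (by simp)

theorem norm_le_norm_mul_of_mem_pair_inv (hmin : IsMinimalPair (x, y)) {u v : FreeGroup α}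
    (hu : u ∈ ({x, x⁻¹} : Set (FreeGroup α))) (hv : v ∈ ({y, y⁻¹} : Set (FreeGroup α))) :
    ‖u‖ ≤ ‖u * v‖ ∧ ‖v‖ ≤ ‖u * v‖ := by
  have huv := pairReach_of_mem_pair_inv hu hv
  have h₁ := hmin _ (huv.tail (.mulFst u v))
  have h₂ := hmin _ (huv.tail (.mulSnd u v))
  have hu' := norm_eq_of_mem_pair_inv hu
  have hv' := norm_eq_of_mem_pair_inv hv
  dsimp only at h₁ h₂
  omega

theorem norm_le_norm_mul_of_mem (hmin : IsMinimalPair (x, y)) {u v : FreeGroup α}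
    (hu : u ∈ symmPair x y) (hv : v ∈ symmPair x y) (huv : v ≠ u⁻¹) :
    ‖u‖ ≤ ‖u * v‖ ∧ ‖v‖ ≤ ‖u * v‖ := by
  have hself : ∀ {z : FreeGroup α}, u ∈ ({z, z⁻¹} : Set (FreeGroup α)) →
      v ∈ ({z, z⁻¹} : Set (FreeGroup α)) → ‖u‖ ≤ ‖u * v‖ ∧ ‖v‖ ≤ ‖u * v‖ := by
    intro z hu hv
    obtain rfl := (eq_or_eq_inv_of_mem_pair_inv hu hv).resolve_right huv
    exact ⟨norm_le_norm_mul_self v, norm_le_norm_mul_self v⟩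
  rcases hu with hu | hu <;> rcases hv with hv | hv
  · exact hself hu hv
  · exact hmin.norm_le_norm_mul_of_mem_pair_inv hu hv
  · have := hmin.norm_le_norm_mul_of_mem_pair_inv (inv_mem_pair_inv hv) (inv_mem_pair_inv hu)
    rwa [← mul_inv_rev, norm_inv_eq, norm_inv_eq, norm_inv_eq, and_comm] at this
  · exact hself hu hv

theorem eq_one_of_prefix_of_suffix (hmin : IsMinimalPair (x, y)) {p q A B : FreeGroup α}
    (hpq : x = p * q) (hA : A ∈ ({y, y⁻¹} : Set (FreeGroup α)))
    (hB : B ∈ ({y, y⁻¹} : Set (FreeGroup α)))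
    (hp : p.toWord <+: A.toWord) (hq : q.toWord <:+ B.toWord) (hlen : ‖p‖ = ‖q‖)
    (hy : ‖p‖ + ‖q‖ ≤ ‖y‖) : x = 1 := by
  obtain rfl | rfl := eq_or_eq_inv_of_mem_pair_inv hA hB
  · have hminB : IsMinimalPair (x, B) := by
      rcases hB with rfl | rfl
      exacts [hmin, hmin.inv_snd]
    obtain ⟨t, hB', ht⟩ := exists_eq_mul_mul_of_prefix_of_suffix hp hq
      (by rwa [norm_eq_of_mem_pair_inv hB])
    exact eq_one_of_eq_mul_mul hminB hpq hB' ht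
  · have hq' : q⁻¹.toWord <+: A.toWord := by
      simpa only [toWord_inv, invRev_invRev] using hq.invRev
    have hpq' : p = q⁻¹ := toWord_injective <|
      (prefix_of_prefix_length_le hp hq' (by rw [toWord_inv, invRev_length]; exact hlen.le))
        |>.eq_of_length (by rw [toWord_inv, invRev_length]; exact hlen)
    rw [hpq, hpq', inv_mul_cancel]

theorem cancellation_add_lt_of_middle_eq_fst (hmin : IsMinimalPair (x, y)) (hx : x ≠ 1)
    {u w : FreeGroup α} (hu : u ∈ symmPair x y) (hw : w ∈ symmPair x y) (hux : x ≠ u⁻¹)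
    (hxw : w ≠ x⁻¹) :
    cancellation u x + cancellation x w < ‖x‖ := by
  by_contra! hle
  have hxS : x ∈ symmPair x y := Or.inl (Set.mem_insert x _)
  have hux₁ := norm_mul_add_two_mul_cancellation u x
  have hxw₁ := norm_mul_add_two_mul_cancellation x w
  obtain ⟨hux₂, hux₃⟩ := hmin.norm_le_norm_mul_of_mem hu hxS hux
  have hxw₂ := (hmin.norm_le_norm_mul_of_mem hxS hw hxw).2
  have hxx := two_mul_cancellation_self_lt hx
  -- both cancellations are exactly half of `x`, which rules out `u = x` and `w = x`
  have hu' : u ∈ ({y, y⁻¹} : Set (FreeGroup α)) := by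
    refine hu.resolve_left ?_
    rintro (rfl | rfl)
    · omega
    · exact hux (inv_inv x).symm
  have hw' : w ∈ ({y, y⁻¹} : Set (FreeGroup α)) := by
    refine hw.resolve_left ?_
    rintro (rfl | rfl)
    · omega
    · exact hxw rfl
  obtain ⟨p, q, hpq, hp, hq, hpn, hqn⟩ := exists_eq_mul_of_le_cancellation_add hle
  refine hx (hmin.eq_one_of_prefix_of_suffix hpq (inv_mem_pair_inv hu') (inv_mem_pair_inv hw')
    hp hq (by omega) ?_)
  rw [← norm_eq_of_mem_pair_inv hu']
  omega

theorem cancellation_add_lt (hmin : IsMinimalPair (x, y)) (hx : x ≠ 1) (hy : y ≠ 1)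
    {u v w : FreeGroup α} (hu : u ∈ symmPair x y) (hv : v ∈ symmPair x y)
    (hw : w ∈ symmPair x y) (huv : v ≠ u⁻¹) (hvw : w ≠ v⁻¹) :
    cancellation u v + cancellation v w < ‖v‖ := by
  have hmiddle : ∀ {x y : FreeGroup α}, IsMinimalPair (x, y) → x ≠ 1 →
      ∀ {u v w : FreeGroup α}, u ∈ symmPair x y → v ∈ ({x, x⁻¹} : Set (FreeGroup α)) →
      w ∈ symmPair x y → v ≠ u⁻¹ → w ≠ v⁻¹ → cancellation u v + cancellation v w < ‖v‖ := by
    intro x y hmin hx u v w hu hv hw huv hvw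
    rcases hv with rfl | rfl
    · exact hmin.cancellation_add_lt_of_middle_eq_fst hx hu hw huv hvw
    · rw [← cancellation_inv_inv u, ← cancellation_inv_inv _ w, inv_inv, add_comm, norm_inv_eq]
      exact hmin.cancellation_add_lt_of_middle_eq_fst hx (inv_mem_symmPair hw)
        (inv_mem_symmPair hu) (by simpa using hvw.symm) (by simpa using huv.symm)
  rcases hv with hv | hv
  · exact hmiddle hmin hx hu hv hw huv hvw
  · rw [symmPair_comm] at hu hw
    exact hmiddle hmin.swap hy hu hv hw huv hvw

theorem isNielsenReduced (hmin : IsMinimalPair (x, y)) (hx : x ≠ 1) (hy : y ≠ 1) :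
    IsNielsenReduced (symmPair x y) where
  one_notMem := by
    rintro ((h | h) | (h | h))
    exacts [hx h.symm, hx (inv_eq_one.mp h.symm), hy h.symm, hy (inv_eq_one.mp h.symm)]
  norm_le_norm_mul _ hu _ hv huv := (hmin.norm_le_norm_mul_of_mem hu hv huv).1
  cancellation_add_lt _ hu _ hv _ hw := hmin.cancellation_add_lt hx hy hu hv hw

end IsMinimalPair

theorem closure_of_zero_of_one :
    Subgroup.closure {(of 0 : FreeGroup (Fin 2)), of 1} = ⊤ := by
  rw [← closure_range_of]
  congr
  ext
  simp [Fin.exists_fin_two, eq_comm]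

theorem zpowers_ne_top (z : FreeGroup (Fin 2)) : Subgroup.zpowers z ≠ ⊤ := by
  intro h
  obtain ⟨i, hi⟩ : of 0 ∈ Subgroup.zpowers z := h ▸ Subgroup.mem_top _
  obtain ⟨j, hj⟩ : of 1 ∈ Subgroup.zpowers z := h ▸ Subgroup.mem_top _
  have hcomm : (of 0 : FreeGroup (Fin 2)) * of 1 = of 1 * of 0 := by
    rw [← hi, ← hj, zpow_mul_comm]
  exact absurd hcomm (by decide)

theorem ne_one_of_closure_pair_eq_top {x y : FreeGroup (Fin 2)}
    (h : Subgroup.closure {x, y} = ⊤) : x ≠ 1 := by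
  rintro rfl
  refine zpowers_ne_top y (eq_top_iff.mpr (h ▸ ?_))
  rw [Subgroup.zpowers_eq_closure, Subgroup.closure_le]
  exact Set.insert_subset (one_mem _) Subgroup.subset_closure

theorem isConjUpToInv_commutatorElement_of_closure_eq_top {x y : FreeGroup (Fin 2)}
    (h : Subgroup.closure {x, y} = ⊤) :
    IsConjUpToInv ⁅x, y⁆ ⁅(of 0 : FreeGroup (Fin 2)), of 1⁆ := by
  obtain ⟨q, hreach, hmin⟩ := exists_pairReach_isMinimalPair (x, y)
  have hq : Subgroup.closure {q.1, q.2} = ⊤ := PairReach.closure_eq_top hreach h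
  have hN := IsMinimalPair.isNielsenReduced hmin (ne_one_of_closure_pair_eq_top hq)
    (ne_one_of_closure_pair_eq_top (Set.pair_comm q.1 q.2 ▸ hq))
  have hsub : ({q.1, q.2} : Set (FreeGroup (Fin 2))) ⊆ symmPair q.1 q.2 := by
    simp [symmPair, Set.insert_subset_iff]
  have hmem : ∀ i, of i ∈ symmPair q.1 q.2 := fun i =>
    hN.mem_of_norm_eq_one (fun _ => inv_mem_symmPair)
      (Subgroup.closure_mono hsub (hq ▸ Subgroup.mem_top _)) (norm_of i)
  exact PairReach.isConjUpToInv_commutatorElement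
    (hreach.trans (pairReach_of_mem_symmPair (hmem 0) (hmem 1) (by decide) (by decide)))

end FreeGroup

/-- Any automorphism of the free group F₂ on a, b sends [a,b] = aba⁻¹b⁻¹ to a conjugate
of [a,b] or of [a,b]⁻¹. -/
theorem commutator_conj_invariant (α : FreeGroup (Fin 2) ≃* FreeGroup (Fin 2)) :
    let a := FreeGroup.of (0 : Fin 2)
    let b := FreeGroup.of (1 : Fin 2)
    let c := a * b * a⁻¹ * b⁻¹
    IsConj c (α c) ∨ IsConj c⁻¹ (α c) := by
  intro a b c
  have hgen : Subgroup.closure {α a, α b} = ⊤ := by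
    rw [← Set.image_pair, ← MulEquiv.coe_toMonoidHom, ← MonoidHom.map_closure,
      FreeGroup.closure_of_zero_of_one]
    exact Subgroup.map_top_of_surjective _ α.surjective
  rw [show α c = ⁅α a, α b⁆ from map_commutatorElement α a b]
  exact (FreeGroup.isConjUpToInv_commutatorElement_of_closure_eq_top hgen).symm
end

section
/- If α is an automorphism of a free product A * B with α(A) = A (as a set), then α restricts to an automorphism of A, and the composite π ∘ α|_B, where π : A * B → B kills A, extends to an automorphism of B. -/
open Monoid

/-- If α is an automorphism of A * B with α(A) = A, then α restricts to an automorphism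
of A, and π ∘ α (π : A * B → B killing A) restricts to an automorphism of B. -/
theorem aut_of_free_product_preserving_factor {A B : Type*} [Group A] [Group B]
    (α : Coprod A B ≃* Coprod A B)
    (hA : α '' Set.range (Coprod.inl : A →* Coprod A B) =
      Set.range (Coprod.inl : A →* Coprod A B)) :
    (∃ β : A ≃* A, ∀ a : A, α (Coprod.inl a) = Coprod.inl (β a)) ∧
    (∃ γ : B ≃* B, ∀ b : B,
      γ b = Coprod.lift (1 : A →* B) (MonoidHom.id B) (α (Coprod.inr b))) := by
  have hA' : α.symm '' Set.range (Coprod.inl : A →* Coprod A B) =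
      Set.range (Coprod.inl : A →* Coprod A B) := by
    conv_lhs => rw [← hA, ← Set.image_comp]
    simp [Function.comp_def]
  -- forward map on A
  have hf : ∀ a : A, ∃ a' : A, Coprod.inl a' = α (Coprod.inl a) := by
    intro a
    have : α (Coprod.inl a) ∈ Set.range (Coprod.inl : A →* Coprod A B) := by
      rw [← hA]; exact ⟨Coprod.inl a, ⟨a, rfl⟩, rfl⟩
    exact this
  have hg : ∀ a : A, ∃ a' : A, Coprod.inl a' = α.symm (Coprod.inl a) := by
    intro a
    have : α.symm (Coprod.inl a) ∈ Set.range (Coprod.inl : A →* Coprod A B) := by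
      rw [← hA']; exact ⟨Coprod.inl a, ⟨a, rfl⟩, rfl⟩
    exact this
  choose f hfspec using hf
  choose g hgspec using hg
  have inj := (Coprod.inl_injective (M := A) (N := B))
  constructor
  · refine ⟨MulEquiv.mk' ⟨f, g, fun a => inj ?_, fun a => inj ?_⟩
      (fun a b => inj ?_), fun a => (hfspec a).symm⟩
    · rw [hgspec, hfspec, MulEquiv.symm_apply_apply]
    · rw [hfspec, hgspec, MulEquiv.apply_symm_apply]
    · show Coprod.inl (f (a*b)) = Coprod.inl (f a * f b)
      rw [hfspec, map_mul, map_mul, map_mul, hfspec, hfspec]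
  · set π : Coprod A B →* B := Coprod.lift (1 : A →* B) (MonoidHom.id B) with hπ
    have hkill : ∀ x ∈ Set.range (Coprod.inl : A →* Coprod A B), π x = 1 := by
      rintro x ⟨a, rfl⟩; simp [hπ]
    set γ : B →* B := π.comp (α.toMonoidHom.comp Coprod.inr) with hγ
    set γ' : B →* B := π.comp (α.symm.toMonoidHom.comp Coprod.inr) with hγ'
    have key : (π.comp α.toMonoidHom) = γ.comp π := by
      apply Coprod.hom_ext
      · ext a
        simp only [MonoidHom.comp_apply]
        rw [hkill _ (by rw [← hA]; exact ⟨Coprod.inl a, ⟨a, rfl⟩, rfl⟩)]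
        simp [hπ]
      · ext b; simp [hγ, hπ]
    have key' : (π.comp α.symm.toMonoidHom) = γ'.comp π := by
      apply Coprod.hom_ext
      · ext a
        simp only [MonoidHom.comp_apply]
        rw [hkill _ (by rw [← hA']; exact ⟨Coprod.inl a, ⟨a, rfl⟩, rfl⟩)]
        simp [hπ]
      · ext b; simp [hγ', hπ]
    have hli : ∀ b, γ (γ' b) = b := by
      intro b
      have h1 : γ' b = π (α.symm (Coprod.inr b)) := by simp [hγ']
      have h2 : γ (π (α.symm (Coprod.inr b))) = π (α (α.symm (Coprod.inr b))) := by
        have := congrArg (fun h : Coprod A B →* B => h (α.symm (Coprod.inr b))) key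
        simpa using this.symm
      rw [h1, h2, MulEquiv.apply_symm_apply]
      simp [hπ]
    have hri : ∀ b, γ' (γ b) = b := by
      intro b
      have h1 : γ b = π (α (Coprod.inr b)) := by simp [hγ]
      have h2 : γ' (π (α (Coprod.inr b))) = π (α.symm (α (Coprod.inr b))) := by
        have := congrArg (fun h : Coprod A B →* B => h (α (Coprod.inr b))) key'
        simpa using this.symm
      rw [h1, h2, MulEquiv.symm_apply_apply]
      simp [hπ]
    exact ⟨MulEquiv.mk' ⟨γ, γ', hri, hli⟩ (map_mul γ), fun b => rfl⟩
end
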